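/- Let 𝕋 = ℝ/ℤ, let α ∈ 𝕋 be irrational, and let f : 𝕋 → ℝ be continuous such that f(x) = g(x+α) − g(x) for all x ∈ 𝕋, where g : 𝕋 → ℝ is continuous. Define U : 𝕋² → 𝕋² by U(x,y) = (x+α, y + f(x) mod 1). Then for every continuous F : 𝕋² → ℝ and every (x,y) ∈ 𝕋², the Birkhoff averages (1/N) Σ_{n=0}^{N−1} F(U^n(x,y)) converge as N → ∞, with limit ∫_0^1 F(x+t, y + (g(x+t) − g(x)) mod 1) dt. -/

import Mathlib

/-! The map `(x, y) ↦ (x, y + g x)` conjugates the product of the rotation by `α` with the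
identity to the skew product `U`, so `Uⁿ (x, y) = (x + n • α, y + (g (x + n • α) - g x))`.
The Birkhoff averages of `F` at `(x, y)` are therefore those of the continuous function
`z ↦ F (z, y + (g z - g x))` along the rotation orbit of `x`, and Weyl's equidistribution theorem
identifies their limit with its Haar integral. Weyl's theorem holds for the characters, where the
averages are Cesàro means of a geometric sequence with ratio `≠ 1`, and passes to all continuous
functions because those with convergent averages form a closed subspace, while trigonometric
polynomials are dense. -/

notation "𝕋" => AddCircle (1 : ℝ)

instance : Fact ((0 : ℝ) < 1) := ⟨one_pos⟩

open Filter Topology MeasureTheory Finset AddCircle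

section BirkhoffAverage

variable {𝕜 X : Type*} [RCLike 𝕜]

theorem norm_birkhoffAverage_le {E : Type*} [SeminormedAddCommGroup E] [NormedSpace 𝕜 E]
    (f : X → X) {g : X → E} {C : ℝ} (hg : ∀ y, ‖g y‖ ≤ C) (n : ℕ) (x : X) :
    ‖birkhoffAverage 𝕜 f g n x‖ ≤ C := by
  rcases Nat.eq_zero_or_pos n with rfl | hn
  · simpa using (norm_nonneg _).trans (hg x)
  calc ‖birkhoffAverage 𝕜 f g n x‖
      ≤ (n : ℝ)⁻¹ * ∑ k ∈ range n, ‖g (f^[k] x)‖ := by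
        rw [birkhoffAverage, birkhoffSum, norm_smul, norm_inv, RCLike.norm_natCast]
        gcongr
        exact norm_sum_le _ _
    _ ≤ (n : ℝ)⁻¹ * (n * C) := by
        gcongr
        simpa using Finset.sum_le_card_nsmul (range n) _ _ fun k _ => hg (f^[k] x)
    _ = C := by field_simp

variable [TopologicalSpace X] [CompactSpace X]

theorem dist_birkhoffAverage_le_dist (f : X → X) (h h' : C(X, 𝕜)) (n : ℕ) (x : X) :
    dist (birkhoffAverage 𝕜 f h n x) (birkhoffAverage 𝕜 f h' n x) ≤ dist h h' := by
  rw [dist_eq_norm, dist_eq_norm, ← Pi.sub_apply (birkhoffAverage 𝕜 f h n),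
    ← Pi.sub_apply (birkhoffAverage 𝕜 f h), ← birkhoffAverage_sub]
  exact norm_birkhoffAverage_le f (fun y => (h - h').norm_coe_le_norm y) n x

variable [MeasurableSpace X] [BorelSpace X]

theorem continuous_integral_continuousMap (μ : Measure X) [IsFiniteMeasure μ] :
    Continuous fun h : C(X, 𝕜) => ∫ y, h y ∂μ := by
  convert continuous_integral.comp (ContinuousMap.toLp (E := 𝕜) 1 μ 𝕜).continuous with h
  exact integral_congr_ae (ContinuousMap.coeFn_toLp μ h).symm

variable (𝕜)

/-- The continuous observables for which `x` is a `μ`-generic point of `f`. -/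
def genericSubmodule (f : X → X) (μ : Measure X) [IsFiniteMeasure μ] (x : X) :
    Submodule 𝕜 C(X, 𝕜) where
  carrier := {h | Tendsto (birkhoffAverage 𝕜 f h · x) atTop (𝓝 (∫ y, h y ∂μ))}
  zero_mem' := by simp [birkhoffAverage, birkhoffSum]
  add_mem' {h h'} hh hh' := by
    have hint : ∀ h : C(X, 𝕜), Integrable h μ := fun h =>
      h.continuous.integrable_of_hasCompactSupport (.of_compactSpace _)
    simp only [Set.mem_ofPred_eq, ContinuousMap.coe_add, birkhoffAverage_add, Pi.add_apply,
      integral_add (hint h) (hint h')] at *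
    exact hh.add hh'
  smul_mem' c h hh := by
    simp only [Set.mem_ofPred_eq, ContinuousMap.coe_smul, Pi.smul_apply, integral_smul] at *
    simpa [birkhoffAverage, birkhoffSum, Finset.mul_sum, mul_left_comm c] using hh.const_smul c

theorem isClosed_genericSubmodule (f : X → X) (μ : Measure X) [IsFiniteMeasure μ] (x : X) :
    IsClosed (genericSubmodule 𝕜 f μ x : Set C(X, 𝕜)) := by
  have hequi : Equicontinuous fun n (h : C(X, 𝕜)) => birkhoffAverage 𝕜 f h n x :=
    (LipschitzWith.uniformEquicontinuous _ 1 fun n =>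
      LipschitzWith.of_dist_le_mul fun h h' => by
        simpa using dist_birkhoffAverage_le_dist f h h' n x).equicontinuous
  exact hequi.isClosed_setOfPred_tendsto (continuous_integral_continuousMap μ)

end BirkhoffAverage

theorem tendsto_inv_natCast_mul_geom_sum {𝕜 : Type*} [RCLike 𝕜] {z : 𝕜} (hz : ‖z‖ ≤ 1)
    (hz1 : z ≠ 1) :
    Tendsto (fun N : ℕ => (N : 𝕜)⁻¹ * ∑ k ∈ range N, z ^ k) atTop (𝓝 0) := by
  have hbound (N : ℕ) : ‖(N : 𝕜)⁻¹ * ∑ k ∈ range N, z ^ k‖ ≤ 2 / ‖z - 1‖ / N := by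
    have hpow : ‖z ^ N - 1‖ ≤ 2 := calc
      ‖z ^ N - 1‖ ≤ ‖z‖ ^ N + 1 := by simpa using norm_sub_le (z ^ N) 1
      _ ≤ 2 := by linarith [pow_le_one₀ (norm_nonneg z) hz (n := N)]
    rw [geom_sum_eq hz1, norm_mul, norm_div, norm_inv, RCLike.norm_natCast, inv_mul_eq_div]
    gcongr
  exact squeeze_zero_norm hbound (tendsto_const_nhds.div_atTop tendsto_natCast_atTop_atTop)

section Rotation

variable {T : ℝ}

theorem fourier_add_nsmul (m : ℤ) (x α : AddCircle T) (k : ℕ) :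
    fourier m (x + k • α) = fourier m x * fourier m α ^ k := by
  simp [fourier_apply, smul_add, smul_comm m k, toCircle_add, toCircle_nsmul]

variable [hT : Fact (0 < T)]

theorem fourier_ne_one_of_not_isOfFinAddOrder {α : AddCircle T} (hα : ¬IsOfFinAddOrder α)
    {m : ℤ} (hm : m ≠ 0) : fourier m α ≠ 1 := by
  intro h
  refine hα (isOfFinAddOrder_iff_zsmul_eq_zero.2 ⟨m, hm, injective_toCircle hT.out.ne' ?_⟩)
  rw [toCircle_zero]
  exact Circle.coe_injective (by simpa [fourier_apply] using h)

theorem integral_fourier_of_ne_zero {m : ℤ} (hm : m ≠ 0) :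
    ∫ y, fourier (T := T) m y ∂haarAddCircle = 0 :=
  integral_eq_zero_of_add_right_eq_neg (fourier_add_half_inv_index hm hT.out)

theorem tendsto_birkhoffAverage_fourier {α : AddCircle T} (hα : ¬IsOfFinAddOrder α) (m : ℤ)
    (x : AddCircle T) :
    Tendsto (birkhoffAverage ℂ (· + α) (fourier (T := T) m) · x) atTop
      (𝓝 (∫ y, fourier (T := T) m y ∂haarAddCircle)) := by
  rcases eq_or_ne m 0 with rfl | hm
  · have hconst : (fourier 0 : C(AddCircle T, ℂ)) ∘ (· + α) = fourier 0 := by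
      ext; simp
    refine tendsto_const_nhds.congr' ((eventually_ne_atTop 0).mono fun N hN => ?_)
    simp [birkhoffAverage_of_comp_eq ℂ hconst (Nat.cast_ne_zero.2 hN)]
  · have hgeom := tendsto_inv_natCast_mul_geom_sum (by rw [fourier_apply, Circle.norm_coe])
      (fourier_ne_one_of_not_isOfFinAddOrder hα hm)
    rw [integral_fourier_of_ne_zero hm, ← mul_zero (fourier m x)]
    refine (hgeom.const_mul (fourier m x)).congr fun N => ?_
    simp only [birkhoffAverage, birkhoffSum, add_right_iterate_apply, fourier_add_nsmul,
      smul_eq_mul, Finset.mul_sum, mul_left_comm]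

theorem tendsto_birkhoffAverage_add_right {α : AddCircle T} (hα : ¬IsOfFinAddOrder α)
    (h : C(AddCircle T, ℂ)) (x : AddCircle T) :
    Tendsto (birkhoffAverage ℂ (· + α) h · x) atTop (𝓝 (∫ y, h y ∂haarAddCircle)) := by
  have hspan : Submodule.span ℂ (Set.range fourier) ≤ genericSubmodule ℂ (· + α) haarAddCircle x :=
    Submodule.span_le.2 (Set.range_subset_iff.2 (tendsto_birkhoffAverage_fourier hα · x))
  have hclosure := Submodule.topologicalClosure_minimal _ hspan (isClosed_genericSubmodule ..)
  rw [span_fourier_closure_eq_top] at hclosure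
  exact hclosure (Submodule.mem_top (x := h))

theorem tendsto_birkhoffAverage_add_right_real {α : AddCircle T} (hα : ¬IsOfFinAddOrder α)
    {h : AddCircle T → ℝ} (hh : Continuous h) (x : AddCircle T) :
    Tendsto (birkhoffAverage ℝ (· + α) h · x) atTop (𝓝 (∫ y, h y ∂haarAddCircle)) := by
  rw [← tendsto_ofReal_iff, ← integral_complex_ofReal]
  exact (tendsto_birkhoffAverage_add_right hα ⟨_, Complex.continuous_ofReal.comp hh⟩ x).congr
    fun N => (map_birkhoffAverage ℝ ℂ Complex.ofRealHom _ h N x).symm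

theorem integral_haarAddCircle_eq_intervalIntegral {E : Type*} [NormedAddCommGroup E]
    [NormedSpace ℝ E] (f : AddCircle T → E) (x : AddCircle T) :
    ∫ y, f y ∂haarAddCircle = T⁻¹ • ∫ t in (0 : ℝ)..T, f (x + t) := by
  rw [← integral_add_left_eq_self f x, integral_haarAddCircle,
    ← AddCircle.intervalIntegral_preimage T 0, zero_add]

end Rotation

theorem not_isOfFinAddOrder_of_forall_ne_ratCast {α : 𝕋} (hα : ∀ q : ℚ, α ≠ ((q : ℝ) : 𝕋)) :
    ¬IsOfFinAddOrder α := by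
  obtain ⟨a, rfl⟩ := QuotientAddGroup.mk_surjective α
  refine not_isOfFinAddOrder_iff_forall_rat_ne_div.2 fun q hq => hα q ?_
  rw [hq, div_one]

theorem iterate_skewProduct_of_coboundary {X A : Type*} [AddCommGroup A] (R : X → X)
    {f g : X → A} (hcob : ∀ x, f x = g (R x) - g x) (n : ℕ) (p : X × A) :
    (fun q : X × A => (R q.1, q.2 + f q.1))^[n] p =
      (R^[n] p.1, p.2 + (g (R^[n] p.1) - g p.1)) := by
  have hsemi : Function.Semiconj (fun q : X × A => (q.1, q.2 + g q.1)) (Prod.map R id)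
      (fun q : X × A => (R q.1, q.2 + f q.1)) := fun q =>
    Prod.ext rfl (by simp [hcob])
  have := hsemi.iterate_right n (p.1, p.2 - g p.1)
  simp only [Prod.map_iterate, Prod.map_apply, Function.iterate_id, id, sub_add_cancel] at this
  rw [← this]
  congr 1
  abel

theorem birkhoff_average_of_coboundary_skew_general
    (α : 𝕋) (hα : ∀ q : ℚ, α ≠ ((q : ℝ) : 𝕋))
    (g : 𝕋 → ℝ) (hg : Continuous g)
    (f : 𝕋 → ℝ)
    (hcob : ∀ x : 𝕋, f x = g (x + α) - g x)
    (F : 𝕋 × 𝕋 → ℝ) (hF : Continuous F) (p : 𝕋 × 𝕋) :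
    Filter.Tendsto
      (fun N : ℕ => (1 / (N : ℝ)) * ∑ n ∈ Finset.range N,
        F ((fun q : 𝕋 × 𝕋 => (q.1 + α, q.2 + ((f q.1 : ℝ) : 𝕋)))^[n] p))
      Filter.atTop
      (nhds (∫ t in (0 : ℝ)..1,
        F (p.1 + ((t : ℝ) : 𝕋), p.2 + ((g (p.1 + ((t : ℝ) : 𝕋)) - g p.1 : ℝ) : 𝕋)))) := by
  have horbit (n : ℕ) := iterate_skewProduct_of_coboundary (· + α)
    (f := fun x => ((f x : ℝ) : 𝕋)) (g := fun x => ((g x : ℝ) : 𝕋))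
    (fun x => by rw [hcob, AddCircle.coe_sub]) n p
  set h : 𝕋 → ℝ := fun z => F (z, p.2 + ((g z - g p.1 : ℝ) : 𝕋))
  have hh : Continuous h := by fun_prop
  have hlim := tendsto_birkhoffAverage_add_right_real
    (not_isOfFinAddOrder_of_forall_ne_ratCast hα) hh p.1
  rw [integral_haarAddCircle_eq_intervalIntegral h p.1, inv_one, one_smul] at hlim
  refine hlim.congr fun N => ?_
  simp [birkhoffAverage, birkhoffSum, horbit, h]

/-- Let `α ∈ 𝕋` be irrational, `g : 𝕋 → ℝ` continuous,
`f x = g (x + α) - g x`, and `U(x, y) = (x + α, y + (f x mod 1))` on `𝕋²`.  Then for every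
continuous `F : 𝕋² → ℝ` and every `(x, y) ∈ 𝕋²` the Birkhoff averages
`(1/N) ∑_{n<N} F(U^n (x,y))` converge, with limit
`∫₀¹ F(x + t, y + (g(x+t) - g(x) mod 1)) dt`. -/
theorem birkhoff_average_of_coboundary_skew
    (α : 𝕋) (hα : ∀ q : ℚ, α ≠ ((q : ℝ) : 𝕋))
    (g : 𝕋 → ℝ) (hg : Continuous g)
    (f : 𝕋 → ℝ) (hf : Continuous f)
    (hcob : ∀ x : 𝕋, f x = g (x + α) - g x)
    (F : 𝕋 × 𝕋 → ℝ) (hF : Continuous F) (p : 𝕋 × 𝕋) :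
    Filter.Tendsto
      (fun N : ℕ => (1 / (N : ℝ)) * ∑ n ∈ Finset.range N,
        F ((fun q : 𝕋 × 𝕋 => (q.1 + α, q.2 + ((f q.1 : ℝ) : 𝕋)))^[n] p))
      Filter.atTop
      (nhds (∫ t in (0 : ℝ)..1,
        F (p.1 + ((t : ℝ) : 𝕋), p.2 + ((g (p.1 + ((t : ℝ) : 𝕋)) - g p.1 : ℝ) : 𝕋)))) :=
  birkhoff_average_of_coboundary_skew_general α hα g hg f hcob F hF p
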